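/- If Sort t s is derivable from the program clauses, then the list s is a permutation of the list t (List.Perm t s). -/

import Mathlib

inductive AppendP {α : Type*} : List α → List α → List α → Prop
  | nil (k : List α) : AppendP [] k k
  | cons (x : α) {l k m : List α} : AppendP l k m → AppendP (x :: l) k (x :: m)

inductive Split {α : Type*} (leq gr : α → α → Prop) :
    α → List α → List α → List α → Prop
  | nil (x : α) : Split leq gr x [] [] []
  | small {a x : α} {r s b : List α} :
      leq a x → Split leq gr x r s b → Split leq gr x (a :: r) (a :: s) b
  | big {a x : α} {r s b : List α} :
      gr a x → Split leq gr x r s b → Split leq gr x (a :: r) s (a :: b)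

inductive SortP {α : Type*} (leq gr : α → α → Prop) : List α → List α → Prop
  | nil : SortP leq gr [] []
  | cons {f : α} {r sm bg ss bs s : List α} :
      Split leq gr f r sm bg → SortP leq gr sm ss → SortP leq gr bg bs →
      AppendP ss (f :: bs) s → SortP leq gr (f :: r) s

open List

theorem AppendP.eq_append {α : Type*} {l k m : List α} (h : AppendP l k m) : m = l ++ k := by
  induction h with
  | nil => rfl
  | cons _ _ ih => rw [ih, cons_append]

theorem Split.perm_append {α : Type*} {leq gr : α → α → Prop} {x : α} {r s b : List α}
    (h : Split leq gr x r s b) : r ~ s ++ b := by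
  induction h with
  | nil => rfl
  | small _ _ ih => exact ih.cons _
  | big _ _ ih => exact (ih.cons _).trans perm_middle.symm

theorem sort_perm {α : Type*} (leq gr : α → α → Prop)
    {t s : List α} (h : SortP leq gr t s) : List.Perm t s := by
  induction h with
  | nil => rfl
  | @cons f r sm bg ss bs s hsplit _ _ happend ihsm ihbg =>
    rw [happend.eq_append]
    calc f :: r ~ f :: (sm ++ bg) := hsplit.perm_append.cons f
      _ ~ f :: (ss ++ bs) := (ihsm.append ihbg).cons f
      _ ~ ss ++ f :: bs := perm_middle.symm
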